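/- Let 1/2 < H < 1 and let c_H := (H − 1/2) · ( 2H Γ(3/2 − H) / ( Γ(H + 1/2) Γ(2 − 2H) ) )^{1/2}, where Γ is the Gamma function. Then for all real numbers 0 < s < t, c_H^2 · t^{H−1/2} s^{H−1/2} ∫_0^s u^{1−2H} (t−u)^{H−3/2} (s−u)^{H−3/2} du = H(2H−1) (t−s)^{2H−2}. Equivalently, writing ∂_1 K_H(t,u) := c_H u^{1/2−H} (t−u)^{H−3/2} t^{H−1/2} for the partial derivative in its first argument of the Volterra kernel K_H of fractional Brownian motion, one has ∫_0^s ∂_1 K_H(t,u) ∂_1 K_H(s,u) du = H(2H−1)(t−s)^{2H−2}. -/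

import Mathlib

open MeasureTheory Real

/-- The constant `c_H` of the Volterra kernel of fractional Brownian motion. -/
noncomputable def cH (H : ℝ) : ℝ :=
  (H - 1 / 2) * (2 * H * Gamma (3 / 2 - H) / (Gamma (H + 1 / 2) * Gamma (2 - 2 * H))) ^ ((1:ℝ) / 2)

/-!
The Möbius substitution `u = s t w / (t - s + s w)` maps `[0, 1]` increasingly onto `[0, s]`, with
`t - u = t (t - s) / D`, `s - u = s (t - s) (1 - w) / D` and `du = s t (t - s) / D² dw`, where
`D = t - s + s w`. For exponents `u ^ (a - 1) (t - u) ^ (-(a + b)) (s - u) ^ (b - 1)` all powers of `D`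
cancel, leaving `s ^ (a + b - 1) t ^ (-b) (t - s) ^ (-a)` times the Beta integral `B(a, b)`.
With `a = 2 - 2H` and `b = H - 1/2` this is the integral of the theorem, and since
`Γ(H + 1/2) = (H - 1/2) Γ(H - 1/2)`, the factor `c_H² B(2 - 2H, H - 1/2)` equals `H (2H - 1)`.
-/

open Set

lemma rpow_mobius_identity {a b x y z d : ℝ} (hx : 0 < x) (hy : 0 < y) (hz : 0 < z)
    (hd : 0 < d) :
    (x * y / d) ^ (a - 1) * (y * z / d) ^ (-(a + b)) * (x * z / d) ^ (b - 1) *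
      (x * y * z / d ^ 2) = x ^ (a + b - 1) * y ^ (-b) * z ^ (-a) := by
  rw [← exp_log hx, ← exp_log hy, ← exp_log hz, ← exp_log hd]
  generalize log x = ξ, log y = η, log z = ζ, log d = δ
  simp only [← exp_add, ← exp_sub, ← exp_nat_mul, ← exp_mul, Nat.cast_ofNat]
  congr 1
  ring

lemma integral_rpow_mul_one_sub_rpow {a b : ℝ} (ha : 0 < a) (hb : 0 < b) :
    ∫ x in (0:ℝ)..1, x ^ (a - 1) * (1 - x) ^ (b - 1) = Gamma a * Gamma b / Gamma (a + b) := by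
  have hβ : Complex.betaIntegral a b = ↑(∫ x in (0:ℝ)..1, x ^ (a - 1) * (1 - x) ^ (b - 1)) := by
    rw [Complex.betaIntegral, ← intervalIntegral.integral_ofReal]
    refine intervalIntegral.integral_congr fun x hx => ?_
    rw [uIcc_of_le zero_le_one] at hx
    rw [Complex.ofReal_mul, Complex.ofReal_cpow hx.1, Complex.ofReal_cpow (sub_nonneg.2 hx.2)]
    push_cast
    rfl
  have key := Complex.Gamma_mul_Gamma_eq_betaIntegral (s := a) (t := b)
    (by simpa using ha) (by simpa using hb)
  rw [hβ, ← Complex.ofReal_add, Complex.Gamma_ofReal, Complex.Gamma_ofReal,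
    Complex.Gamma_ofReal] at key
  rw [eq_div_iff (Gamma_pos_of_pos (add_pos ha hb)).ne', mul_comm]
  exact_mod_cast key.symm

theorem integral_rpow_mul_sub_rpow_mul_sub_rpow {a b s t : ℝ} (ha : 0 < a) (hb : 0 < b) (hs : 0 < s)
    (hst : s < t) :
    ∫ u in (0:ℝ)..s, u ^ (a - 1) * (t - u) ^ (-(a + b)) * (s - u) ^ (b - 1) =
      s ^ (a + b - 1) * t ^ (-b) * (t - s) ^ (-a) * (Gamma a * Gamma b / Gamma (a + b)) := by
  have ht : 0 < t := hs.trans hst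
  have hts : 0 < t - s := sub_pos.2 hst
  have hD : ∀ w ∈ Icc (0:ℝ) 1, 0 < t - s + s * w := fun w hw => by nlinarith [hw.1]
  have hφ : ∀ w ∈ Icc (0:ℝ) 1, HasDerivAt (fun w => s * t * w / (t - s + s * w))
      (s * t * (t - s) / (t - s + s * w) ^ 2) w := fun w hw => by
    refine (((hasDerivAt_id' w).const_mul (s * t)).div
      (((hasDerivAt_id' w).const_mul s).const_add (t - s)) (hD w hw).ne').congr_deriv ?_
    ring
  have hsubst := intervalIntegral.integral_comp_mul_deriv_of_deriv_nonneg (a := 0) (b := 1)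
    (g := fun u => u ^ (a - 1) * (t - u) ^ (-(a + b)) * (s - u) ^ (b - 1))
    (fun w hw => (hφ w (by simpa using hw)).continuousAt.continuousWithinAt)
    (fun w hw => hφ w (by simpa using Ioo_subset_Icc_self hw))
    fun w _ => div_nonneg (mul_pos (mul_pos hs ht) hts).le (sq_nonneg _)
  have hφ0 : s * t * 0 / (t - s + s * 0) = 0 := by simp
  have hφ1 : s * t * 1 / (t - s + s * 1) = s := by field_simp; ring
  simp only [Function.comp_def, hφ0, hφ1] at hsubst
  rw [← hsubst, ← integral_rpow_mul_one_sub_rpow ha hb, ← intervalIntegral.integral_const_mul]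
  refine intervalIntegral.integral_congr fun w hw => ?_
  rw [uIcc_of_le zero_le_one] at hw
  have hDw := hD w hw
  rw [show t - s * t * w / (t - s + s * w) = t * (t - s) / (t - s + s * w) by field_simp; ring,
    show s - s * t * w / (t - s + s * w) = s * (t - s) / (t - s + s * w) * (1 - w) by
      field_simp; ring,
    show s * t * w / (t - s + s * w) = s * t / (t - s + s * w) * w by ring,
    mul_rpow (by positivity) hw.1, mul_rpow (by positivity) (sub_nonneg.2 hw.2),
    ← rpow_mobius_identity hs ht hts hDw]
  ring

lemma cH_sq_mul_beta {H : ℝ} (hH1 : 1 / 2 < H) (hH2 : H < 1) :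
    cH H ^ 2 * (Gamma (2 - 2 * H) * Gamma (H - 1 / 2) / Gamma (3 / 2 - H)) = H * (2 * H - 1) := by
  have hH : 0 < H - 1 / 2 := by linarith
  have hG1 := Gamma_pos_of_pos hH
  have hG2 := Gamma_pos_of_pos (by linarith : 0 < 2 - 2 * H)
  have hG3 := Gamma_pos_of_pos (by linarith : 0 < 3 / 2 - H)
  have hG : Gamma (H + 1 / 2) = (H - 1 / 2) * Gamma (H - 1 / 2) := by
    rw [← Gamma_add_one (by linarith)]; ring_nf
  rw [cH, mul_pow, ← sqrt_eq_rpow, sq_sqrt (by rw [hG]; positivity), hG]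
  generalize Gamma (H - 1 / 2) = g₁ at *
  generalize Gamma (2 - 2 * H) = g₂ at *
  generalize Gamma (3 / 2 - H) = g₃ at *
  field_simp

/-- For `1/2 < H < 1` and `0 < s < t`,
`c_H^2 t^{H−1/2} s^{H−1/2} ∫_0^s u^{1−2H} (t−u)^{H−3/2} (s−u)^{H−3/2} du
  = H(2H−1)(t−s)^{2H−2}`,
i.e. `∫_0^s ∂₁K_H(t,u) ∂₁K_H(s,u) du = H(2H−1)(t−s)^{2H−2}` where
`∂₁K_H(t,u) = c_H u^{1/2−H} (t−u)^{H−3/2} t^{H−1/2}`. -/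
theorem volterra_kernel_derivative_integral
    (H : ℝ) (hH1 : 1 / 2 < H) (hH2 : H < 1)
    (s t : ℝ) (hs : 0 < s) (hst : s < t) :
    cH H ^ 2 * t ^ (H - 1 / 2) * s ^ (H - 1 / 2) *
      ∫ u in (0:ℝ)..s, u ^ (1 - 2 * H) * (t - u) ^ (H - 3 / 2) * (s - u) ^ (H - 3 / 2) =
    H * (2 * H - 1) * (t - s) ^ (2 * H - 2) := by
  have key := integral_rpow_mul_sub_rpow_mul_sub_rpow (a := 2 - 2 * H) (b := H - 1 / 2)
    (by linarith) (by linarith) hs hst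
  rw [show -(2 - 2 * H + (H - 1 / 2)) = H - 3 / 2 by ring,
    show 2 - 2 * H + (H - 1 / 2) - 1 = 1 / 2 - H by ring,
    show 2 - 2 * H + (H - 1 / 2) = 3 / 2 - H by ring, show 2 - 2 * H - 1 = 1 - 2 * H by ring,
    show H - 1 / 2 - 1 = H - 3 / 2 by ring, show -(2 - 2 * H) = 2 * H - 2 by ring] at key
  have hss : s ^ (H - 1 / 2) * s ^ (1 / 2 - H) = 1 := by rw [← rpow_add hs]; norm_num
  have htt : t ^ (H - 1 / 2) * t ^ (-(H - 1 / 2)) = 1 := by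
    rw [← rpow_add (hs.trans hst)]; norm_num
  calc _ = cH H ^ 2 * (Gamma (2 - 2 * H) * Gamma (H - 1 / 2) / Gamma (3 / 2 - H)) *
        (s ^ (H - 1 / 2) * s ^ (1 / 2 - H)) * (t ^ (H - 1 / 2) * t ^ (-(H - 1 / 2))) *
        (t - s) ^ (2 * H - 2) := by rw [key]; ring
    _ = _ := by rw [cH_sq_mul_beta hH1 hH2, hss, htt]; ring
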